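/- Let A be an infinite-dimensional separable Banach algebra with trivial product, X a Banach A-bimodule with trivial right action, and Y = ann_A X. Then there exists a bounded linear injection from X/Y into ℓ∞(ℕ, Y). -/

import Mathlib

/-!
Since the product of `A` is trivial, `L b (L a x) = L (b * a) x = 0`, so every `L a` maps `X`
into `Y = ann_A X`. For a bounded sequence `(aₙ)` with dense span in `A`, the operator
`x ↦ (L aₙ x)ₙ : X → ℓ∞(ℕ, Y)` is bounded, and its kernel is exactly `Y` because `a ↦ L a x` is
continuous and linear. It therefore factors through an injection of `X ⧸ Y`.
-/

/-- The annihilator of `A` in `X` (with trivial right action), as a submodule. -/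
def annihilatorSubmodule {A X : Type*} [NonUnitalNormedRing A] [NormedSpace ℝ A]
    [NormedAddCommGroup X] [NormedSpace ℝ X] (L : A →L[ℝ] X →L[ℝ] X) :
    Submodule ℝ X where
  carrier := {x | ∀ a : A, L a x = 0}
  zero_mem' := fun a => map_zero (L a)
  add_mem' := by
    intro x y hx hy a
    simp [map_add, hx a, hy a]
  smul_mem' := by
    intro c x hx a
    simp [map_smul, hx a]

open Set ENNReal NNReal

namespace ContinuousLinearMap

variable {𝕜 E ι : Type*} {F : ι → Type*} [NormedField 𝕜] [SeminormedAddCommGroup E]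
  [NormedSpace 𝕜 E] [∀ i, NormedAddCommGroup (F i)] [∀ i, NormedSpace 𝕜 (F i)]

noncomputable def toLpInfty (T : ∀ i, E →L[𝕜] F i) (C : ℝ≥0) (hT : ∀ i x, ‖T i x‖ ≤ C * ‖x‖) :
    E →L[𝕜] lp F ∞ :=
  LinearMap.mkContinuous
    { toFun x := ⟨fun i => T i x, memℓp_infty ⟨C * ‖x‖, by rintro _ ⟨i, rfl⟩; exact hT i x⟩⟩
      map_add' x y := by ext i; exact map_add (T i) x y
      map_smul' c x := by ext i; exact map_smul (T i) c x }
    C fun x => lp.norm_le_of_forall_le (by positivity) fun i => hT i x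

variable {T : ∀ i, E →L[𝕜] F i} {C : ℝ≥0} {hT : ∀ i x, ‖T i x‖ ≤ C * ‖x‖}

@[simp]
theorem toLpInfty_apply (x : E) (i : ι) : toLpInfty T C hT x i = T i x := rfl

theorem toLpInfty_eq_zero_iff {x : E} : toLpInfty T C hT x = 0 ↔ ∀ i, T i x = 0 := by
  simp only [lp.ext_iff, funext_iff, toLpInfty_apply, lp.coeFn_zero, Pi.zero_apply]

end ContinuousLinearMap

theorem Submodule.injective_liftQL {R M M₂ : Type*} [Ring R] [TopologicalSpace M]
    [AddCommGroup M] [Module R M] [TopologicalSpace M₂] [AddCommGroup M₂] [Module R M₂]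
    (S : Submodule R M) {f : M →L[R] M₂} (h : S ≤ f.ker) (h' : f.ker ≤ S) :
    Function.Injective (S.liftQL f h) :=
  LinearMap.ker_eq_bot.1 (S.ker_liftQ_eq_bot _ h h')

theorem exists_seq_norm_le_one_dense_span (A : Type*) [NormedAddCommGroup A] [NormedSpace ℝ A]
    [TopologicalSpace.SeparableSpace A] :
    ∃ a : ℕ → A, (∀ n, ‖a n‖ ≤ 1) ∧ Dense (Submodule.span ℝ (range a) : Set A) := by
  have : Nonempty A := ⟨0⟩
  obtain ⟨u, hu⟩ := TopologicalSpace.exists_dense_seq A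
  have hpos (n : ℕ) : 0 < 1 + ‖u n‖ := by positivity
  refine ⟨fun n => (1 + ‖u n‖)⁻¹ • u n, fun n => ?_, ?_⟩
  · rw [norm_smul, norm_inv, Real.norm_of_nonneg (hpos n).le, inv_mul_le_one₀ (hpos n)]
    linarith
  · refine hu.mono ?_
    rintro _ ⟨n, rfl⟩
    have : u n = (1 + ‖u n‖) • (1 + ‖u n‖)⁻¹ • u n := by
      rw [smul_smul, mul_inv_cancel₀ (hpos n).ne', one_smul]
    rw [SetLike.mem_coe, this]
    exact Submodule.smul_mem _ _ (Submodule.subset_span (mem_range_self n))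

section annihilator

variable {A X : Type*} [NonUnitalNormedRing A] [NormedSpace ℝ A]
  [NormedAddCommGroup X] [NormedSpace ℝ X] {L : A →L[ℝ] X →L[ℝ] X}

theorem apply_mem_annihilatorSubmodule (htriv : ∀ a b : A, a * b = 0)
    (hL : ∀ (a b : A) (x : X), L (a * b) x = L a (L b x)) (a : A) (x : X) :
    L a x ∈ annihilatorSubmodule L := fun b => by
  rw [← hL, htriv, map_zero, zero_apply]

theorem mem_annihilatorSubmodule_of_dense_span {s : Set A}
    (hs : Dense (Submodule.span ℝ s : Set A)) {x : X} (hx : ∀ a ∈ s, L a x = 0) :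
    x ∈ annihilatorSubmodule L := fun a =>
  DFunLike.congr_fun (ContinuousLinearMap.ext_on hs (f := L.flip x) (g := 0) hx) a

end annihilator

theorem exists_injection_quotient_into_linfty_general
    {A : Type*} [NonUnitalNormedRing A] [NormedSpace ℝ A]
    [TopologicalSpace.SeparableSpace A]
    (htriv : ∀ a b : A, a * b = 0)
    {X : Type*} [NormedAddCommGroup X] [NormedSpace ℝ X]
    (L : A →L[ℝ] X →L[ℝ] X) (hL : ∀ (a b : A) (x : X), L (a * b) x = L a (L b x)) :
    ∃ J : (X ⧸ annihilatorSubmodule L) →L[ℝ] lp (fun _ : ℕ => annihilatorSubmodule L) ⊤,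
      Function.Injective J := by
  obtain ⟨a, ha_le, ha_dense⟩ := exists_seq_norm_le_one_dense_span A
  let T (n : ℕ) : X →L[ℝ] annihilatorSubmodule L :=
    (L (a n)).codRestrict _ (apply_mem_annihilatorSubmodule htriv hL (a n))
  have hT (n : ℕ) (x : X) : ‖T n x‖ ≤ ‖L‖₊ * ‖x‖ :=
    (L (a n)).le_of_opNorm_le (by simpa using L.le_opNorm_of_le (ha_le n)) x
  let Φ := ContinuousLinearMap.toLpInfty T ‖L‖₊ hT
  have hker : Φ.ker = annihilatorSubmodule L := by
    ext x
    refine ContinuousLinearMap.toLpInfty_eq_zero_iff.trans ⟨fun hx => ?_, fun hx n => ?_⟩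
    · refine mem_annihilatorSubmodule_of_dense_span ha_dense ?_
      rintro _ ⟨n, rfl⟩
      exact congrArg Subtype.val (hx n)
    · exact Subtype.ext (hx (a n))
  exact ⟨_, Submodule.injective_liftQL _ hker.ge hker.le⟩

/-- Let A be an infinite-dimensional separable Banach algebra with trivial product, X a
Banach A-bimodule with trivial right action (left action L), and Y = ann_A X. Then there
is a bounded linear injection from X/Y into ℓ∞(ℕ, Y). -/
theorem exists_injection_quotient_into_linfty
    {A : Type*} [NonUnitalNormedRing A] [NormedSpace ℝ A] [CompleteSpace A]
    [TopologicalSpace.SeparableSpace A]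
    (htriv : ∀ a b : A, a * b = 0) (hinf : ¬ FiniteDimensional ℝ A)
    {X : Type*} [NormedAddCommGroup X] [NormedSpace ℝ X] [CompleteSpace X]
    (L : A →L[ℝ] X →L[ℝ] X) (hL : ∀ (a b : A) (x : X), L (a * b) x = L a (L b x)) :
    ∃ J : (X ⧸ annihilatorSubmodule L) →L[ℝ] lp (fun _ : ℕ => annihilatorSubmodule L) ⊤,
      Function.Injective J :=
  exists_injection_quotient_into_linfty_general htriv L hL
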